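/- arXiv:2112.00545 — 4 statements merged into one kernel-verified Lean document; each statement's English description precedes it below -/
import Mathlib

section
/- Let q be a prime power and n ≥ 2. The non-degenerate Hermitian variety H(n,q^2) has exactly (q^{n+1} + (-1)^n)(q^n - (-1)^n)/(q^2 - 1) points; in particular, the Hermitian curve H(2,q^2) has exactly q^3 + 1 points. -/
open Projectivization
open scoped LinearAlgebra.Projectivization

variable (F : Type) [Field F] [Fintype F]

/-- The projective space PG(n, |F|) over `F`, as the projectivization of `Fin (n+1) → F`. -/
abbrev PG (n : ℕ) := ℙ F (Fin (n+1) → F)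

/-- The Hermitian variety `H(n,q^2)`: points `[x_0 : ... : x_n]` with
`x_0^{q+1} + ... + x_n^{q+1} = 0`. -/
def Herm (q n : ℕ) : Set (PG F n) :=
  {p | ∑ i, (p.rep i) ^ (q+1) = 0}

/-- The set of points of `PG(n,q^2)` lying on the line given by a `2`-dimensional subspace. -/
def lineSet (n : ℕ) (W : Submodule F (Fin (n+1) → F)) : Set (PG F n) :=
  {p | p.submodule ≤ W}

/-- `W` determines a line of `PG(n,q^2)`, i.e. it is a `2`-dimensional subspace. -/
def IsLine (n : ℕ) (W : Submodule F (Fin (n+1) → F)) : Prop :=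
  Module.finrank F W = 2

/-- A line is tangent to `H(n,q^2)` if it meets it in exactly one point. -/
def IsTangent (q n : ℕ) (W : Submodule F (Fin (n+1) → F)) : Prop :=
  IsLine F n W ∧ (lineSet F n W ∩ Herm F q n).ncard = 1

/-- The graph `NU(n+1,q^2)`: vertices are points off the Hermitian variety, two distinct
vertices adjacent iff the line joining them is tangent to `H(n,q^2)`. -/
def NU (q n : ℕ) : SimpleGraph {p : PG F n // p ∉ Herm F q n} where
  Adj u v := u ≠ v ∧ IsTangent F q n (Submodule.span F {u.1.rep, v.1.rep})
  symm := ⟨by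
    rintro u v ⟨h1, h2⟩
    exact ⟨h1.symm, by rwa [Set.pair_comm]⟩⟩
  loopless := ⟨fun u h => h.1 rfl⟩

/-- A strongly regular graph with parameters `(v, k, l, m)`. -/
def IsSRG {V : Type} (G : SimpleGraph V) (v k l m : ℤ) : Prop :=
  (Nat.card V : ℤ) = v ∧
  (∀ x, (Nat.card (G.neighborSet x) : ℤ) = k) ∧
  (∀ x y, G.Adj x y → (Nat.card (G.commonNeighbors x y) : ℤ) = l) ∧
  (∀ x y, x ≠ y → ¬ G.Adj x y → (Nat.card (G.commonNeighbors x y) : ℤ) = m)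


/-!
Let `N_m(c)` be the number of `x ∈ F^m` with `∑ xᵢ^{q+1} = c`. As `x ↦ x^q` is a field
automorphism fixing every `x^{q+1}`, `N_m(c) = 0` unless `c^q = c`, and `x ↦ x^{q+1}` maps `Fˣ`
onto `{c ≠ 0 | c^q = c}` with fibres of size `q + 1`. Splitting off the first coordinate gives
`N_{m+1}(0) = (q+1) q^{2m} - q N_m(0)`, hence `q N_m(0) = q^{2m} + (q-1)(-1)^m q^m`. Finally the
nonzero solutions counted by `N_{n+1}(0)` are the `q^2 - 1` representatives of each point of
`H(n,q^2)`.
-/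

open Finset

namespace IsCyclic

variable {G : Type*} [CommGroup G] [IsCyclic G] [Fintype G] {d : ℕ}

theorem range_powMonoidHom_eq_ker (hd : d ∣ Nat.card G) :
    (powMonoidHom d : G →* G).range = (powMonoidHom (Nat.card G / d)).ker := by
  refine Subgroup.eq_of_le_of_card_ge ?_ ?_
  · rintro _ ⟨u, rfl⟩
    rw [MonoidHom.mem_ker, powMonoidHom_apply, powMonoidHom_apply, ← pow_mul,
      Nat.mul_div_cancel' hd, pow_card_eq_one']
  · rw [card_powMonoidHom_range, card_powMonoidHom_ker, Nat.gcd_eq_right hd,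
      Nat.gcd_eq_right (Nat.div_dvd_of_dvd hd)]

variable [DecidableEq G]

theorem card_pow_eq_one_of_dvd (hd : d ∣ Nat.card G) : #{u : G | u ^ d = 1} = d :=
  calc #{u : G | u ^ d = 1} = Nat.card (powMonoidHom d : G →* G).ker := by
        rw [Nat.card_eq_fintype_card, ← Fintype.card_subtype]
        exact Fintype.card_congr (Equiv.refl _)
    _ = d := by rw [card_powMonoidHom_ker, Nat.gcd_eq_right hd]

theorem sum_comp_pow {M : Type*} [AddCommMonoid M] (hd : d ∣ Nat.card G) (g : G → M) :
    ∑ u, g (u ^ d) = d • ∑ v with v ^ (Nat.card G / d) = 1, g v := by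
  have himage : univ.image (· ^ d) = ({v | v ^ (Nat.card G / d) = 1} : Finset G) := by
    ext v
    simpa using SetLike.ext_iff.mp (range_powMonoidHom_eq_ker hd) v
  have hfiber : ∀ v ∈ univ.image (· ^ d), #{u : G | u ^ d = v} = d := by
    intro v hv
    have h := MonoidHom.card_fiber_eq_of_mem_range (powMonoidHom d : G →* G)
      (by simpa using hv) ⟨1, one_pow d⟩
    simp only [powMonoidHom_apply] at h
    rw [h, card_pow_eq_one_of_dvd hd]
  rw [sum_comp, ← himage, smul_sum]
  exact sum_congr rfl fun v hv => by rw [hfiber v hv]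

end IsCyclic

theorem Fintype.sum_eq_add_sum_units {G₀ M : Type*} [GroupWithZero G₀] [Fintype G₀]
    [DecidableEq G₀] [AddCommMonoid M] (f : G₀ → M) : ∑ a, f a = f 0 + ∑ u : G₀ˣ, f u := by
  rw [Fintype.sum_eq_add_sum_compl 0, Finset.sum_subtype _ (p := (· ≠ 0)) (by simp),
    ← Fintype.sum_equiv unitsEquivNeZero _ _ (fun _ => rfl)]
  rfl

theorem Projectivization.card_nonzero_mk_mem {k V : Type*} [DivisionRing k] [AddCommGroup V]
    [Module k V] (S : Set (ℙ k V)) :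
    Nat.card {v : {v : V // v ≠ 0} // mk k v.1 v.2 ∈ S} = Nat.card S * Nat.card kˣ := by
  rw [← Nat.card_prod]
  exact Nat.card_congr <| ((nonZeroEquivProjectivizationProdUnits k V).subtypeEquiv
    (p := fun v => mk k v.1 v.2 ∈ S) (q := fun x => x.1 ∈ S) (fun _ => Iff.rfl)).trans
    Equiv.prodSubtypeFstEquivSubtypeProd

namespace FiniteField

variable {K : Type*} [Field K] [Fintype K] {q : ℕ}

theorem two_le_of_card_eq_sq (hK : Fintype.card K = q ^ 2) : 2 ≤ q := by
  have := hK ▸ Fintype.one_lt_card (α := K)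
  nlinarith

theorem exists_ringHom_eq_pow_of_card_eq_sq (hK : Fintype.card K = q ^ 2) :
    ∃ φ : K →+* K, ∀ x, φ x = x ^ q := by
  obtain ⟨p, _, n, hp, hcard⟩ := FiniteField.card' K
  have hq : q ∣ p ^ (n : ℕ) := hcard ▸ hK ▸ dvd_pow_self q two_ne_zero
  obtain ⟨k, -, rfl⟩ := (Nat.dvd_prime_pow hp).mp hq
  have := Fact.mk hp
  exact ⟨iterateFrobenius K p k, fun x => iterateFrobenius_def ..⟩

theorem neg_pow_of_card_eq_sq (hK : Fintype.card K = q ^ 2) (c : K) : (-c) ^ q = -c ^ q := by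
  obtain ⟨φ, hφ⟩ := exists_ringHom_eq_pow_of_card_eq_sq hK
  rw [← hφ, ← hφ, map_neg]

theorem pow_add_one_pow_of_card_eq_sq (hK : Fintype.card K = q ^ 2) (x : K) :
    (x ^ (q + 1)) ^ q = x ^ (q + 1) := by
  rw [← pow_mul, add_one_mul, ← sq, pow_add, ← hK, FiniteField.pow_card, pow_succ']

/-- `x ↦ x^{q+1}` maps `Kˣ` onto the units `c` with `c^{q-1} = 1`, i.e. `c^q = c`, each fibre
having `q + 1` elements. -/
theorem sum_comp_pow_add_one (hK : Fintype.card K = q ^ 2) (f : K → ℤ)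
    (hf : ∀ c, c ^ q ≠ c → f c = 0) :
    ∑ a, f (a ^ (q + 1)) = (q + 1) * ∑ c, f c - q * f 0 := by
  classical
  have hq := two_le_of_card_eq_sq hK
  have hcard : Nat.card Kˣ = (q + 1) * (q - 1) := by
    rw [Nat.card_eq_fintype_card, Fintype.card_units, hK, ← Nat.sq_sub_sq, one_pow]
  have hnorm : ∑ u : Kˣ, f (↑u ^ (q + 1)) = (q + 1) • ∑ v : Kˣ with v ^ (q - 1) = 1, f ↑v := by
    simp only [← Units.val_pow_eq_pow_val]
    rw [IsCyclic.sum_comp_pow (g := fun u : Kˣ => f u) (hcard ▸ dvd_mul_right _ _), hcard,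
      Nat.mul_div_cancel_left _ (by omega)]
  have hfixed : ∑ v : Kˣ with v ^ (q - 1) = 1, f ↑v = ∑ v : Kˣ, f ↑v := by
    refine sum_filter_of_ne fun v _ hv => ?_
    have hvq : v ^ (q - 1) * v = v := by
      rw [pow_sub_one_mul (by omega)]
      exact Units.ext (by_contra fun h => hv (hf v (by simpa using h)))
    exact mul_eq_right.mp hvq
  rw [Fintype.sum_eq_add_sum_units, Fintype.sum_eq_add_sum_units f,
    zero_pow (Nat.succ_ne_zero q), hnorm, hfixed, nsmul_eq_mul]
  push_cast
  ring

end FiniteField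

section HermitianForm

open FiniteField

variable {K : Type*} [Field K] {q : ℕ}

variable (q) in
def hermForm {m : ℕ} (x : Fin m → K) : K := ∑ i, x i ^ (q + 1)

theorem hermForm_zero {m : ℕ} : hermForm q (0 : Fin m → K) = 0 := by
  simp [hermForm]

theorem hermForm_smul {m : ℕ} (a : K) (x : Fin m → K) :
    hermForm q (a • x) = a ^ (q + 1) * hermForm q x := by
  simp only [hermForm, mul_sum, Pi.smul_apply, smul_eq_mul, mul_pow]

theorem hermForm_succ {m : ℕ} (x : Fin (m + 1) → K) :
    hermForm q x = x 0 ^ (q + 1) + hermForm q (Fin.tail x) :=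
  Fin.sum_univ_succ _

variable [Fintype K]

theorem hermForm_pow_of_card_eq_sq (hK : Fintype.card K = q ^ 2) {m : ℕ} (x : Fin m → K) :
    hermForm q x ^ q = hermForm q x := by
  obtain ⟨φ, hφ⟩ := exists_ringHom_eq_pow_of_card_eq_sq hK
  rw [hermForm, ← hφ, map_sum]
  simp only [hφ, pow_add_one_pow_of_card_eq_sq hK]

variable [DecidableEq K]

variable (K q) in
def hermCount (m : ℕ) (c : K) : ℕ := #{x : Fin m → K | hermForm q x = c}

theorem sum_hermCount (hK : Fintype.card K = q ^ 2) (m : ℕ) :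
    ∑ c, hermCount K q m c = q ^ (2 * m) := by
  unfold hermCount
  rw [← card_eq_sum_card_fiberwise (fun _ _ => mem_univ _), card_univ,
    Fintype.card_fun, hK, Fintype.card_fin, ← pow_mul]

theorem hermCount_succ (m : ℕ) (c : K) :
    hermCount K q (m + 1) c = ∑ a, hermCount K q m (c - a ^ (q + 1)) := by
  unfold hermCount
  rw [← card_sigma]
  refine card_nbij' (fun x => ⟨x 0, Fin.tail x⟩) (fun p => Fin.cons p.1 p.2) ?_ ?_ ?_ ?_
  · intro x hx
    simp only [mem_coe, mem_filter, mem_sigma, mem_univ, true_and] at hx ⊢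
    rw [← hx, hermForm_succ x]
    ring
  · rintro ⟨a, y⟩ hy
    simp only [mem_coe, mem_filter, mem_sigma, mem_univ, true_and] at hy ⊢
    rw [hermForm_succ, Fin.cons_zero, Fin.tail_cons, hy]
    ring
  · intro x _
    exact Fin.cons_self_tail x
  · rintro ⟨a, y⟩ _
    simp

theorem hermCount_eq_zero_of_pow_ne (hK : Fintype.card K = q ^ 2) {m : ℕ} {c : K}
    (hc : c ^ q ≠ c) : hermCount K q m c = 0 :=
  card_eq_zero.mpr <| filter_eq_empty_iff.mpr fun x _ hx =>
    hc (hx ▸ hermForm_pow_of_card_eq_sq hK x)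

theorem hermCount_succ_zero (hK : Fintype.card K = q ^ 2) (m : ℕ) :
    (hermCount K q (m + 1) 0 : ℤ) = (q + 1) * q ^ (2 * m) - q * hermCount K q m 0 := by
  have hsupp : ∀ c : K, c ^ q ≠ c → (hermCount K q m (-c) : ℤ) = 0 := fun c hc => by
    rw [hermCount_eq_zero_of_pow_ne hK (by rwa [neg_pow_of_card_eq_sq hK, ne_eq, neg_inj]),
      Nat.cast_zero]
  have hsum : ∑ c : K, (hermCount K q m (-c) : ℤ) = q ^ (2 * m) := by
    rw [Fintype.sum_equiv (Equiv.neg K) (fun c => (hermCount K q m (-c) : ℤ))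
      (fun c => (hermCount K q m c : ℤ)) fun _ => rfl]
    exact_mod_cast sum_hermCount hK m
  rw [hermCount_succ, Nat.cast_sum]
  simp only [zero_sub]
  rw [sum_comp_pow_add_one hK _ hsupp, hsum, neg_zero]

/-- Multiplied by `q` so that the formula also covers `m = 0`. -/
theorem mul_hermCount_zero (hK : Fintype.card K = q ^ 2) (m : ℕ) :
    (q : ℤ) * hermCount K q m 0 = q ^ (2 * m) + (q - 1) * (-1) ^ m * q ^ m := by
  induction m with
  | zero => simp [hermCount, hermForm]
  | succ m ih =>
    rw [hermCount_succ_zero hK]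
    linear_combination (-(q : ℤ)) * ih

end HermitianForm

section HermitianVariety

variable {K : Type} [Field K]

theorem mk_mem_herm_iff {q n : ℕ} (v : Fin (n + 1) → K) (hv : v ≠ 0) :
    mk K v hv ∈ Herm K q n ↔ hermForm q v = 0 := by
  obtain ⟨a, ha⟩ := exists_smul_eq_mk_rep K v hv
  change hermForm q (mk K v hv).rep = 0 ↔ _
  rw [← ha, Units.smul_def, hermForm_smul, mul_eq_zero, or_iff_right (pow_ne_zero _ a.ne_zero)]

variable [Fintype K]

theorem hermCount_succ_zero_eq_card_herm [DecidableEq K] (q n : ℕ) :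
    hermCount K q (n + 1) 0 = Nat.card (Herm K q n) * Nat.card Kˣ + 1 := by
  let e : {v : {v : Fin (n + 1) → K // v ≠ 0} // mk K v.1 v.2 ∈ Herm K q n}
      ≃ {v : Fin (n + 1) → K // v ≠ 0 ∧ hermForm q v = 0} :=
    (Equiv.subtypeEquivRight fun v : {v : Fin (n + 1) → K // v ≠ 0} =>
      mk_mem_herm_iff v.1 v.2).trans
      (Equiv.subtypeSubtypeEquivSubtypeInter (· ≠ 0) fun v : Fin (n + 1) → K => hermForm q v = 0)
  rw [← card_nonzero_mk_mem, Nat.card_congr e, Nat.card_eq_fintype_card, Fintype.card_subtype,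
    hermCount]
  have h0 : (0 : Fin (n + 1) → K) ∈ ({x | hermForm q x = 0} : Finset _) := by
    simp [hermForm_zero]
  rw [← card_erase_add_one h0]
  congr 2
  ext
  simp [and_comm]

theorem card_herm_mul {q : ℕ} (hK : Fintype.card K = q ^ 2) (n : ℕ) :
    ((q : ℤ) ^ 2 - 1) * Nat.card (Herm K q n)
      = (q ^ (n + 1) + (-1) ^ n) * (q ^ n - (-1) ^ n) := by
  classical
  have hq : (q : ℤ) ≠ 0 := by have := FiniteField.two_le_of_card_eq_sq hK; omega
  have hunits : (Nat.card Kˣ : ℤ) = q ^ 2 - 1 := by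
    rw [Nat.card_eq_fintype_card, Fintype.card_units, hK,
      Nat.cast_sub (Nat.one_le_pow _ _ (by omega)), Nat.cast_pow, Nat.cast_one]
  have hsign : ((-1 : ℤ) ^ n) ^ 2 = 1 := by rw [← pow_mul, pow_mul']; simp
  have key := mul_hermCount_zero hK (n + 1)
  rw [hermCount_succ_zero_eq_card_herm, Nat.cast_add, Nat.cast_mul, hunits] at key
  apply mul_left_cancel₀ hq
  linear_combination key + (q : ℤ) * hsign

end HermitianVariety

theorem herm_card (q n : ℕ) (hF : Fintype.card F = q ^ 2) :
    (Nat.card ↥(Herm F q n) : ℤ) =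
      ((q : ℤ) ^ (n + 1) + (-1 : ℤ) ^ n) * ((q : ℤ) ^ n - (-1 : ℤ) ^ n)
        / ((q : ℤ) ^ 2 - 1) ∧
    Nat.card ↥(Herm F q 2) = q ^ 3 + 1 := by
  have hq : (q : ℤ) ^ 2 - 1 ≠ 0 := by
    have : (2 : ℤ) ≤ q := by exact_mod_cast FiniteField.two_le_of_card_eq_sq hF
    nlinarith
  refine ⟨by rw [← card_herm_mul hF n, Int.mul_ediv_cancel_left _ hq], ?_⟩
  have h : ((q : ℤ) ^ 2 - 1) * Nat.card (Herm F q 2) = ((q : ℤ) ^ 2 - 1) * (q ^ 3 + 1) := by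
    rw [card_herm_mul hF 2]
    ring
  exact_mod_cast mul_left_cancel₀ hq h
end

section
/- Let q be a prime power. For every line ℓ of PG(2,q^2) tangent to the Hermitian curve H(2,q^2), the set of the q^2 points of ℓ not lying on H(2,q^2) is a maximal clique of the graph NU(3,q^2). -/
open Projectivization
open scoped LinearAlgebra.Projectivization

variable (F : Type) [Field F] [Fintype F]

/-- The set of vertices of `NU(n+1,q^2)` (non-isotropic points) lying on the line `W`. -/
def lineVerts (q n : ℕ) (W : Submodule F (Fin (n+1) → F)) :
    Set {p : PG F n // p ∉ Herm F q n} :=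
  {u | u.1 ∈ lineSet F n W}

/-!
Let `B(u, v) = ∑ uᵢ^q vᵢ` be the Hermitian form of the curve and `Q(v) = B(v, v)`.
If the line `W` meets the curve only in `P = [p]`, then `p` is `B`-orthogonal to all of `W`:
otherwise, for `u ∈ W`, `Q(u + a p) = Q(u) + Tr(a B(u, p))`, and since the trace
`x ↦ x + x^q` maps onto `𝔽_q ∋ -Q(u)`, some `[u + a p] ≠ P` would be a second point of the
curve on `W`. Hence `W = p^⊥`. Any two of the `q²` points of `W \ {P}` span the tangent line
`W`, so they form a clique. A vertex `t` off `W` is orthogonal to the point `[v] = t^⊥ ∩ W`,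
which is not `P` (as `t ∉ p^⊥`), hence is a vertex; but a line through two orthogonal
non-isotropic points `s, w` is never tangent: with `[s + μ w]` the points `[s + ζ μ w]`,
`ζ^(q+1) = 1`, are on the curve as well.
-/
namespace HermitianCurve

open Polynomial in
theorem ncard_setOf_pow_eq_mul_le {K : Type*} [Field K] {q : ℕ} (hq : 2 ≤ q) (c : K) :
    {x : K | x ^ q = c * x}.ncard ≤ q := by
  have hdeg : (X ^ q - C c * X : K[X]).natDegree = q := by
    rw [natDegree_sub_eq_left_of_natDegree_lt] <;> rw [natDegree_X_pow]
    exact (natDegree_C_mul_le c X).trans_lt (by rw [natDegree_X]; omega)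
  have hP : (X ^ q - C c * X : K[X]) ≠ 0 := fun h => by simp [h] at hdeg; omega
  calc {x : K | x ^ q = c * x}.ncard ≤ ((X ^ q - C c * X : K[X]).rootSet K).ncard :=
        Set.ncard_le_ncard fun x hx => mem_rootSet.2 ⟨hP, by simp [hx.out]⟩
    _ ≤ q := (ncard_rootSet_le _ K).trans hdeg.le

section Conjugation

variable {K : Type*} [Field K] [Fintype K] {q : ℕ}

theorem exists_charP_pow_eq_of_card_eq_sq (hK : Fintype.card K = q ^ 2) :
    ∃ p k : ℕ, CharP K p ∧ p.Prime ∧ q = p ^ k := by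
  obtain ⟨p, hchar, n, hp, hcard⟩ := FiniteField.card' K
  have hq : q ∣ p ^ (n : ℕ) := hcard ▸ hK ▸ dvd_pow_self q two_ne_zero
  obtain ⟨k, -, rfl⟩ := (Nat.dvd_prime_pow hp).1 hq
  exact ⟨p, k, hchar, hp, rfl⟩

theorem two_le_of_card_eq_sq (hK : Fintype.card K = q ^ 2) : 2 ≤ q := by
  have h := Fintype.one_lt_card (α := K)
  rw [hK] at h
  by_contra! hq
  interval_cases q <;> simp at h

theorem add_pow_of_card_eq_sq (hK : Fintype.card K = q ^ 2) (x y : K) :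
    (x + y) ^ q = x ^ q + y ^ q := by
  obtain ⟨p, k, _, hp, rfl⟩ := exists_charP_pow_eq_of_card_eq_sq hK
  have := Fact.mk hp
  exact add_pow_char_pow x y p k

/-- The conjugation of `𝔽_{q²}` over `𝔽_q`. -/
def conj (hK : Fintype.card K = q ^ 2) : K →+* K where
  toFun x := x ^ q
  map_one' := one_pow q
  map_mul' x y := mul_pow x y q
  map_zero' := zero_pow (by have := two_le_of_card_eq_sq hK; omega)
  map_add' := add_pow_of_card_eq_sq hK

variable (hK : Fintype.card K = q ^ 2)

theorem conj_apply (x : K) : conj hK x = x ^ q := rfl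

theorem conj_involutive : Function.Involutive (conj hK) := fun x => by
  rw [conj_apply, conj_apply, ← pow_mul, ← sq, ← hK, FiniteField.pow_card]

theorem exists_add_conj_eq {a : K} (ha : conj hK a = a) : ∃ x, x + conj hK x = a := by
  have hq := two_le_of_card_eq_sq hK
  let T : K →+ K := AddMonoidHom.id K + (conj hK).toAddMonoidHom
  have hT (x : K) : T x = x + conj hK x := rfl
  -- `T` has kernel of size `≤ q` and lands in the `≤ q` fixed points of `conj`, but
  -- `|ker T| * |range T| = q ^ 2`.
  have hker : Nat.card T.ker ≤ q := by
    rw [← SetLike.coe_sort_coe, Nat.card_coe_set_eq]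
    refine le_trans (Set.ncard_le_ncard fun x hx => ?_) (ncard_setOf_pow_eq_mul_le hq (-1))
    rw [SetLike.mem_coe, AddMonoidHom.mem_ker, hT, conj_apply] at hx
    simp only [Set.mem_ofPred_eq]
    linear_combination hx
  have hrange : (T.range : Set K) ⊆ {x | x ^ q = 1 * x} := by
    rintro _ ⟨x, rfl⟩
    simp only [Set.mem_ofPred_eq, hT, ← conj_apply hK, map_add, conj_involutive hK x]
    ring
  have hcard : Nat.card T.range * Nat.card T.ker = q ^ 2 := by
    rw [← Nat.card_congr (QuotientAddGroup.quotientKerEquivRange T).toEquiv,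
      ← AddSubgroup.card_eq_card_quotient_mul_card_addSubgroup, Nat.card_eq_fintype_card, hK]
  have hrange_eq : (T.range : Set K) = {x | x ^ q = 1 * x} := by
    refine Set.eq_of_subset_of_ncard_le hrange ?_
    rw [← Nat.card_coe_set_eq (T.range : Set K), SetLike.coe_sort_coe]
    have := Nat.card_pos (α := T.ker)
    nlinarith [ncard_setOf_pow_eq_mul_le hq (1 : K)]
  obtain ⟨x, hx⟩ : a ∈ (T.range : Set K) := by
    rw [hrange_eq, Set.mem_ofPred_eq, one_mul, ← conj_apply hK, ha]
  exact ⟨x, hx⟩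

theorem exists_conj_mul_self_eq_one_ne_one : ∃ ζ : K, conj hK ζ * ζ = 1 ∧ ζ ≠ 1 := by
  have hq := two_le_of_card_eq_sq hK
  obtain ⟨g, hg⟩ := IsCyclic.exists_ofOrder_eq_natCard (α := Kˣ)
  rw [Nat.card_units, Nat.card_eq_fintype_card, hK] at hg
  have hsq : q ^ 2 - 1 = (q - 1) * (q + 1) := by
    zify [hq.trans' one_le_two, Nat.one_le_pow _ _ (by omega : 0 < q)]; ring
  refine ⟨((g ^ (q - 1) : Kˣ) : K), ?_, fun h => ?_⟩
  · rw [conj_apply, ← pow_succ, ← Units.val_pow_eq_pow_val, ← pow_mul, ← hsq, ← hg,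
      pow_orderOf_eq_one, Units.val_one]
  · have := Nat.le_of_dvd (by omega) (hg ▸ orderOf_dvd_of_pow_eq_one (Units.val_eq_one.1 h))
    rw [hsq] at this
    have := Nat.le_of_mul_le_mul_left (this.trans (Nat.mul_one _).ge) (by omega)
    omega

end Conjugation

section Form

variable {R ι : Type*} [CommRing R] [Fintype ι] (σ : R →+* R)

def hermForm : (ι → R) →ₛₗ[σ] (ι → R) →ₗ[R] R :=
  LinearMap.mk₂'ₛₗ σ (RingHom.id R) (fun u v => ∑ i, σ (u i) * v i)
    (fun _ _ _ => by simp [add_mul, Finset.sum_add_distrib])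
    (fun _ _ _ => by simp [Finset.mul_sum, mul_assoc])
    (fun _ _ _ => by simp [mul_add, Finset.sum_add_distrib])
    (fun _ _ _ => by simp [Finset.mul_sum, mul_left_comm])

theorem hermForm_apply (u v : ι → R) : hermForm σ u v = ∑ i, σ (u i) * v i := rfl

theorem map_hermForm {σ : R →+* R} (hσ : Function.Involutive σ) (u v : ι → R) :
    σ (hermForm σ u v) = hermForm σ v u := by
  simp [hermForm_apply, hσ _, mul_comm]

theorem hermForm_add_smul_self (u w : ι → R) (a : R) :
    hermForm σ (u + a • w) (u + a • w) = hermForm σ u u + a * hermForm σ u w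
      + σ a * hermForm σ w u + σ a * a * hermForm σ w w := by
  simp only [map_add, map_smulₛₗ, LinearMap.add_apply, LinearMap.smul_apply, smul_eq_mul,
    RingHom.id_apply]
  ring

theorem hermForm_ne_zero {K : Type*} [Field K] (σ : K →+* K) {w : ι → K} (hw : w ≠ 0) :
    hermForm σ w ≠ 0 := by
  classical
  obtain ⟨j, hj⟩ := Function.ne_iff.1 hw
  intro h
  have := LinearMap.congr_fun h (Pi.single j 1)
  simp [hermForm_apply, Pi.single_apply] at this
  exact hj this

theorem finrank_ker_hermForm_add_one {K : Type*} [Field K] (σ : K →+* K) {w : ι → K}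
    (hw : w ≠ 0) : Module.finrank K (LinearMap.ker (hermForm σ w)) + 1 = Fintype.card ι := by
  rw [Module.Dual.finrank_ker_add_one_of_ne_zero (hermForm_ne_zero σ hw),
    Module.finrank_fintype_fun_eq_card]

end Form

section Line

variable {K V : Type*} [Field K] [AddCommGroup V] [Module K V] {s w : V}

theorem add_smul_ne_zero (hs : s ∉ K ∙ w) (a : K) : s + a • w ≠ 0 := fun h =>
  hs (Submodule.mem_span_singleton.2 ⟨-a, by rw [neg_smul, ← eq_neg_of_add_eq_zero_left h]⟩)

theorem mk_add_smul_injective (hw : w ≠ 0) (hs : s ∉ K ∙ w) :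
    Function.Injective fun a : K => mk K (s + a • w) (add_smul_ne_zero hs a) := by
  intro a b hab
  obtain ⟨c, hc⟩ := (mk_eq_mk_iff' K _ _ _ _).1 hab
  have hc1 : c = 1 := by
    by_contra hc1
    refine hs (Submodule.mem_span_singleton.2 ⟨(c - 1)⁻¹ * (a - c * b), ?_⟩)
    rw [mul_smul, inv_smul_eq_iff₀ (sub_ne_zero.2 hc1)]
    linear_combination (norm := module) -hc
  rw [hc1, one_smul, add_right_inj] at hc
  exact (smul_left_injective K hw hc).symm

theorem mk_add_smul_ne (hw : w ≠ 0) (hs : s ∉ K ∙ w) (a : K) :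
    mk K (s + a • w) (add_smul_ne_zero hs a) ≠ mk K w hw := by
  intro h
  obtain ⟨c, hc⟩ := (mk_eq_mk_iff' K _ _ _ _).1 h
  exact hs (Submodule.mem_span_singleton.2 ⟨c - a, by rw [sub_smul, hc, add_sub_cancel_right]⟩)

theorem exists_mk_add_smul_eq (hw : w ≠ 0) (hs : s ∉ K ∙ w) {x : ℙ K V}
    (hx : x.rep ∈ Submodule.span K {s, w}) (hxw : x ≠ mk K w hw) :
    ∃ a, mk K (s + a • w) (add_smul_ne_zero hs a) = x := by
  obtain ⟨α, β, hαβ⟩ := Submodule.mem_span_pair.1 hx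
  rw [← mk_rep x] at hxw ⊢
  have hα : α ≠ 0 := by
    rintro rfl
    exact hxw ((mk_eq_mk_iff' K _ _ _ _).2 ⟨β, by rw [← hαβ, zero_smul, zero_add]⟩)
  refine ⟨β / α, (mk_eq_mk_iff' K _ _ _ _).2 ⟨α⁻¹, ?_⟩⟩
  rw [← hαβ, smul_add, smul_smul, smul_smul, inv_mul_cancel₀ hα, one_smul, inv_mul_eq_div]

theorem exists_ne_zero_mem_inf [FiniteDimensional K V] {A B : Submodule K V}
    (h : Module.finrank K V < Module.finrank K A + Module.finrank K B) :
    ∃ v ∈ A ⊓ B, v ≠ 0 := by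
  have := Submodule.finrank_sup_add_finrank_inf_eq A B
  have := Submodule.finrank_le (A ⊔ B)
  exact Submodule.exists_mem_ne_zero_of_ne_bot (Submodule.one_le_finrank_iff.1 (by omega))

end Line

section Curve

variable {K : Type} [Field K] {q n : ℕ}

def IsTangentAt (q n : ℕ) (W : Submodule K (Fin (n+1) → K)) (P : PG K n) : Prop :=
  lineSet K n W ∩ Herm K q n = {P}

theorem IsTangentAt.mem {W : Submodule K (Fin (n+1) → K)} {P : PG K n}
    (hP : IsTangentAt q n W P) : P ∈ lineSet K n W ∩ Herm K q n :=
  hP ▸ rfl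

theorem isTangent_iff {W : Submodule K (Fin (n+1) → K)} :
    IsTangent K q n W ↔ IsLine K n W ∧ ∃ P, IsTangentAt q n W P := by
  rw [IsTangent, Set.ncard_eq_one]
  rfl

theorem mem_lineSet_iff {W : Submodule K (Fin (n+1) → K)} {x : PG K n} :
    x ∈ lineSet K n W ↔ x.rep ∈ W := by
  rw [← Submodule.span_singleton_le_iff_mem, ← submodule_eq]
  rfl

theorem mk_mem_lineSet_iff {W : Submodule K (Fin (n+1) → K)} {v : Fin (n+1) → K}
    (hv : v ≠ 0) :
    mk K v hv ∈ lineSet K n W ↔ v ∈ W := by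
  rw [← Submodule.span_singleton_le_iff_mem, ← submodule_mk]
  rfl

theorem ncard_lineSet [Fintype K] {W : Submodule K (Fin (n+1) → K)} (hW : IsLine K n W) :
    (lineSet K n W).ncard = Fintype.card K + 1 := by
  have hrange : lineSet K n W = Set.range (map W.subtype W.injective_subtype) := by
    ext x
    refine ⟨fun hx => ⟨mk K ⟨x.rep, mem_lineSet_iff.1 hx⟩ ?_, ?_⟩, ?_⟩
    · simpa using x.rep_nonzero
    · rw [map_mk]; exact mk_rep x
    · rintro ⟨y, rfl⟩
      induction y using ind with | h v hv =>
      rw [map_mk, mk_mem_lineSet_iff]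
      exact v.2
  rw [hrange, Set.ncard_range_of_injective (map_injective _ _), card_of_finrank_two K W hW,
    Nat.card_eq_fintype_card]

theorem span_rep_pair_eq {W : Submodule K (Fin (n+1) → K)} (hW : IsLine K n W) {x y : PG K n}
    (hx : x ∈ lineSet K n W) (hy : y ∈ lineSet K n W) (hxy : x ≠ y) :
    Submodule.span K {x.rep, y.rep} = W := by
  have hli : LinearIndependent K ![x.rep, y.rep] := by
    rwa [← independent_mk_iff_LinearIndependent x.rep_nonzero y.rep_nonzero, mk_rep, mk_rep,
      independent_pair_iff_ne]
  refine (line_unique' x.rep_nonzero y.rep_nonzero hli W hW ?_ ?_).symm <;>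
    rw [Submodule.mk_mem_projectivization_iff, ← mem_lineSet_iff] <;> assumption

theorem isClique_lineVerts {W : Submodule K (Fin (n+1) → K)} (hW : IsTangent K q n W) :
    (NU K q n).IsClique (lineVerts K q n W) := fun x hx y hy hxy =>
  ⟨hxy, by rwa [span_rep_pair_eq hW.1 hx hy (Subtype.coe_injective.ne hxy)]⟩

theorem ncard_lineVerts [Fintype K] {W : Submodule K (Fin (n+1) → K)} (hW : IsTangent K q n W) :
    (lineVerts K q n W).ncard = Fintype.card K := by
  obtain ⟨hWl, P, hP⟩ := isTangent_iff.1 hW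
  have himage : Subtype.val '' lineVerts K q n W = lineSet K n W \ {P} := by
    rw [← hP]
    ext x
    simp [lineVerts]
  rw [← Set.ncard_image_of_injective _ Subtype.val_injective, himage,
    Set.ncard_sdiff_singleton_of_mem hP.mem.1, ncard_lineSet hWl, Nat.add_sub_cancel]

end Curve

section Tangent

variable {K : Type} [Field K] [Fintype K] {q n : ℕ} (hK : Fintype.card K = q ^ 2)

theorem mem_Herm_iff (x : PG K n) : x ∈ Herm K q n ↔ hermForm (conj hK) x.rep x.rep = 0 := by
  simp only [hermForm_apply, conj_apply, ← pow_succ]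
  rfl

theorem mk_mem_Herm_iff {v : Fin (n+1) → K} (hv : v ≠ 0) :
    mk K v hv ∈ Herm K q n ↔ hermForm (conj hK) v v = 0 := by
  obtain ⟨c, hc⟩ := exists_smul_eq_mk_rep K v hv
  rw [mem_Herm_iff hK, ← hc, Units.smul_def]
  simp [c.ne_zero]

theorem IsTangentAt.hermForm_rep_eq_zero {W : Submodule K (Fin (n+1) → K)} {P : PG K n}
    (hP : IsTangentAt q n W P) {w : Fin (n+1) → K} (hw : w ∈ W) :
    hermForm (conj hK) P.rep w = 0 := by
  have hPW := mem_lineSet_iff.1 hP.mem.1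
  have hPH := (mem_Herm_iff hK P).1 hP.mem.2
  by_cases hwP : w ∈ K ∙ P.rep
  · obtain ⟨a, rfl⟩ := Submodule.mem_span_singleton.1 hwP
    rw [map_smul, hPH, smul_zero]
  by_contra hne
  have hne' : hermForm (conj hK) w P.rep ≠ 0 := by
    rwa [← map_hermForm (conj_involutive hK), map_ne_zero]
  obtain ⟨x, hx⟩ := exists_add_conj_eq hK (a := -hermForm (conj hK) w w)
    (by rw [map_neg, map_hermForm (conj_involutive hK)])
  set a := x / hermForm (conj hK) w P.rep
  have ha : a * hermForm (conj hK) w P.rep = x := div_mul_cancel₀ x hne'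
  have ha' : conj hK a * hermForm (conj hK) P.rep w = conj hK x := by
    rw [← map_hermForm (conj_involutive hK), ← map_mul, ha]
  have hiso : hermForm (conj hK) (w + a • P.rep) (w + a • P.rep) = 0 := by
    rw [hermForm_add_smul_self, hPH]
    linear_combination ha + ha' + hx
  have hmem : mk K (w + a • P.rep) (add_smul_ne_zero hwP a) ∈ lineSet K n W ∩ Herm K q n :=
    ⟨(mk_mem_lineSet_iff _).2 (W.add_mem hw (W.smul_mem a hPW)), (mk_mem_Herm_iff hK _).2 hiso⟩
  rw [hP] at hmem
  exact mk_add_smul_ne P.rep_nonzero hwP a (by rw [mk_rep]; exact hmem)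

theorem IsTangentAt.mem_of_hermForm_rep_eq_zero {W : Submodule K (Fin 3 → K)} (hW : IsLine K 2 W)
    {P : PG K 2} (hP : IsTangentAt q 2 W P) {x : Fin 3 → K}
    (hx : hermForm (conj hK) P.rep x = 0) : x ∈ W := by
  have hker := finrank_ker_hermForm_add_one (conj hK) P.rep_nonzero
  rw [Fintype.card_fin] at hker
  have hle : W ≤ LinearMap.ker (hermForm (conj hK) P.rep) := fun w hw =>
    hP.hermForm_rep_eq_zero hK hw
  rwa [Submodule.eq_of_le_of_finrank_eq hle (by rw [hW]; exact (Nat.add_right_cancel hker).symm)]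

theorem not_isTangent_span_pair {s w : Fin (n+1) → K} (hs : hermForm (conj hK) s s ≠ 0)
    (hw : hermForm (conj hK) w w ≠ 0) (hsw : hermForm (conj hK) s w = 0) :
    ¬ IsTangent K q n (Submodule.span K {s, w}) := by
  rw [isTangent_iff]
  rintro ⟨-, X, hX⟩
  have hw0 : w ≠ 0 := by rintro rfl; simp at hw
  have hsw' : s ∉ K ∙ w := by
    intro h
    obtain ⟨a, rfl⟩ := Submodule.mem_span_singleton.1 h
    simp [hw] at hs hsw
    simp [hsw] at hs
  have hQ (a : K) : hermForm (conj hK) (s + a • w) (s + a • w)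
      = hermForm (conj hK) s s + conj hK a * a * hermForm (conj hK) w w := by
    rw [hermForm_add_smul_self, hsw, ← map_hermForm (conj_involutive hK) s w, hsw, map_zero]
    ring
  obtain ⟨μ, rfl⟩ := exists_mk_add_smul_eq hw0 hsw' (mem_lineSet_iff.1 hX.mem.1)
    fun h => hw ((mk_mem_Herm_iff hK hw0).1 (h ▸ hX.mem.2))
  have hμ := (mk_mem_Herm_iff hK _).1 hX.mem.2
  rw [hQ] at hμ
  have hμ0 : μ ≠ 0 := by rintro rfl; simp [hs] at hμ
  obtain ⟨ζ, hζ, hζ1⟩ := exists_conj_mul_self_eq_one_ne_one hK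
  -- multiplying the parameter by a norm-one `ζ ≠ 1` gives a second point of the curve
  have hζμ : mk K (s + (ζ * μ) • w) (add_smul_ne_zero hsw' _)
      ∈ lineSet K n (Submodule.span K {s, w}) ∩ Herm K q n := by
    refine ⟨(mk_mem_lineSet_iff _).2
      (Submodule.mem_span_pair.2 ⟨1, ζ * μ, by rw [one_smul]⟩), (mk_mem_Herm_iff hK _).2 ?_⟩
    rw [hQ, map_mul]
    linear_combination hμ + conj hK μ * μ * hermForm (conj hK) w w * hζ
  rw [hX] at hζμ
  have hζμ_eq : ζ * μ = μ := mk_add_smul_injective hw0 hsw' hζμ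
  exact hζ1 (mul_right_cancel₀ hμ0 (hζμ_eq.trans (one_mul μ).symm))

theorem not_adj_of_hermForm_rep_eq_zero {u v : {p : PG K n // p ∉ Herm K q n}}
    (huv : hermForm (conj hK) u.1.rep v.1.rep = 0) : ¬ (NU K q n).Adj u v := fun h =>
  not_isTangent_span_pair hK (mt (mem_Herm_iff hK _).2 u.2) (mt (mem_Herm_iff hK _).2 v.2) huv h.2

theorem exists_mem_lineVerts_hermForm_eq_zero {W : Submodule K (Fin 3 → K)}
    (hW : IsTangent K q 2 W) {t : {p : PG K 2 // p ∉ Herm K q 2}} (ht : t ∉ lineVerts K q 2 W) :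
    ∃ v ∈ lineVerts K q 2 W, hermForm (conj hK) t.1.rep v.1.rep = 0 := by
  obtain ⟨hWl, P, hP⟩ := isTangent_iff.1 hW
  have hker := finrank_ker_hermForm_add_one (conj hK) t.1.rep_nonzero
  rw [Fintype.card_fin] at hker
  obtain ⟨v, ⟨hvW, hvt⟩, hv0⟩ := exists_ne_zero_mem_inf (A := W)
    (B := LinearMap.ker (hermForm (conj hK) t.1.rep)) (by
      rw [Module.finrank_fin_fun, show Module.finrank K W = 2 from hWl, Nat.add_right_cancel hker]
      norm_num)
  obtain ⟨c, hc⟩ := exists_smul_eq_mk_rep K v hv0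
  have hv : hermForm (conj hK) t.1.rep (mk K v hv0).rep = 0 := by
    rw [← hc, Units.smul_def, map_smul, LinearMap.mem_ker.1 hvt, smul_zero]
  have hvP : mk K v hv0 ≠ P := by
    rintro rfl
    refine ht (mem_lineSet_iff.2 (hP.mem_of_hermForm_rep_eq_zero hK hWl ?_))
    rw [← map_hermForm (conj_involutive hK), hv, map_zero]
  have hvH : mk K v hv0 ∉ Herm K q 2 := fun h =>
    hvP (by rw [← Set.mem_singleton_iff, ← hP]; exact ⟨(mk_mem_lineSet_iff _).2 hvW, h⟩)
  exact ⟨⟨mk K v hv0, hvH⟩, (mk_mem_lineSet_iff _).2 hvW, hv⟩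

end Tangent

end HermitianCurve

theorem tangent_line_maximal_clique (q : ℕ)
    (hF : Fintype.card F = q ^ 2)
    (W : Submodule F (Fin 3 → F)) (hW : IsTangent F q 2 W) :
    (lineVerts F q 2 W).ncard = q ^ 2 ∧
    (NU F q 2).IsClique (lineVerts F q 2 W) ∧
    ∀ T : Set {p : PG F 2 // p ∉ Herm F q 2},
      (NU F q 2).IsClique T → lineVerts F q 2 W ⊆ T → T = lineVerts F q 2 W := by
  refine ⟨(HermitianCurve.ncard_lineVerts hW).trans hF, HermitianCurve.isClique_lineVerts hW,
    fun T hT hWT => Set.Subset.antisymm (fun t htT => ?_) hWT⟩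
  by_contra ht
  obtain ⟨v, hv, htv⟩ := HermitianCurve.exists_mem_lineVerts_hermForm_eq_zero hF hW ht
  exact HermitianCurve.not_adj_of_hermForm_rep_eq_zero hF htv
    (hT htT (hWT hv) fun h => ht (h ▸ hv))
end

section
/- Let q be a prime power. For any two ordered pairs (P_1,P_2) and (Q_1,Q_2) of distinct points of the Hermitian curve H(2,q^2), there exists an F-linear bijection of F^3 whose induced collineation of PG(2,q^2) maps H(2,q^2) onto itself and sends P_1 to Q_1 and P_2 to Q_2; that is, the group of linear collineations stabilizing H(2,q^2) acts 2-transitively on the points of H(2,q^2). -/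
open Projectivization
open scoped LinearAlgebra.Projectivization

variable (F : Type) [Field F] [Fintype F]

/-- The collineation of `PG(n,q^2)` induced by an `F`-linear bijection of `F^{n+1}`. -/
noncomputable def inducedMap (n : ℕ) (f : (Fin (n+1) → F) ≃ₗ[F] (Fin (n+1) → F)) :
    PG F n → PG F n :=
  Projectivization.map (f.toLinearMap) f.injective

/-!
With `σ a = a ^ q`, an involutive automorphism of `F` since `|F| = q²`, the form
`⟨x, y⟩ = ∑ σ (xᵢ) yᵢ` is Hermitian and nondegenerate, and `H(2,q²)` is its set of isotropic
points. Two distinct isotropic points `[u]`, `[v]` of a nondegenerate Hermitian plane are never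
orthogonal, so after rescaling `v` they form a hyperbolic pair; a nonzero vector `w` orthogonal to
both is not isotropic, and it can be scaled to `⟨w, w⟩ = 1` because the norm `c ↦ σ c * c` maps
onto the fixed field of `σ`. The linear map carrying one such basis `(w, u, v)` to another is an
isometry, so it preserves `H(2,q²)`, and it sends the first pair of points to the second.
-/

open Module

theorem IsCyclic.exists_pow_eq_of_pow_eq_one {G : Type*} [Group G] [IsCyclic G] [Finite G]
    {m d : ℕ} (hcard : Nat.card G = m * d) {x : G} (hx : x ^ m = 1) : ∃ y : G, y ^ d = x := by
  obtain ⟨g, hg⟩ := IsCyclic.exists_generator (α := G)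
  obtain ⟨k, rfl⟩ := mem_powers_iff_mem_zpowers.mpr (hg x)
  have hm : 0 < m := Nat.pos_of_mul_pos_right (hcard ▸ Nat.card_pos)
  have hdvd : m * d ∣ m * k := by
    rw [← hcard, ← orderOf_eq_card_of_forall_mem_zpowers hg]
    exact orderOf_dvd_of_pow_eq_one (by rw [mul_comm, pow_mul]; exact hx)
  obtain ⟨j, rfl⟩ := Nat.dvd_of_mul_dvd_mul_left hm hdvd
  exact ⟨g ^ j, by rw [← pow_mul, mul_comm]⟩

namespace FiniteField

variable {K : Type*} [Field K] [Fintype K] {q : ℕ}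

theorem exists_pow_add_one_eq_of_pow_eq_self (hK : Fintype.card K = q ^ 2) {a : K}
    (ha : a ^ q = a) : ∃ c : K, c ^ (q + 1) = a := by
  rcases eq_or_ne a 0 with rfl | ha₀
  · exact ⟨0, zero_pow q.succ_ne_zero⟩
  have hq : q ≠ 0 := by rintro rfl; simp at hK
  have hcard : Nat.card Kˣ = (q - 1) * (q + 1) := by
    rw [Nat.card_units, Nat.card_eq_fintype_card, hK]
    obtain ⟨s, rfl⟩ := Nat.exists_eq_add_one_of_ne_zero hq
    rw [Nat.add_sub_cancel, Nat.sub_eq_of_eq_add]; ring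
  have hpow : Units.mk0 a ha₀ ^ (q - 1) = 1 := by
    ext
    rw [Units.val_pow_eq_pow_val, Units.val_mk0, Units.val_one]
    exact mul_right_cancel₀ ha₀ (by rw [pow_sub_one_mul hq, ha, one_mul])
  obtain ⟨c, hc⟩ := IsCyclic.exists_pow_eq_of_pow_eq_one hcard hpow
  exact ⟨c, by simpa using congrArg Units.val hc⟩

theorem exists_ringHom_apply_eq_pow {n : ℕ} (hq : IsPrimePow q) (hK : Fintype.card K = q ^ n) :
    ∃ σ : K →+* K, ∀ a, σ a = a ^ q := by
  obtain ⟨p, k, hp, -, rfl⟩ := hq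
  have := Fact.mk hp.nat_prime
  have := charP_of_card_eq_prime_pow (R := K) (hK.trans (pow_mul p k n).symm)
  exact ⟨iterateFrobenius K p k, iterateFrobenius_def p k⟩

end FiniteField

namespace LinearMap

variable {K V : Type*} [Field K] [AddCommGroup V] [Module K V] {σ : K →+* K}
  {B : V →ₛₗ[σ] V →ₗ[K] K}

theorem exists_ne_zero_apply_eq_zero_of_two_lt_finrank [FiniteDimensional K V]
    (hV : 2 < finrank K V) (u v : V) : ∃ w ≠ 0, B u w = 0 ∧ B v w = 0 := by
  obtain ⟨w, hw, hw₀⟩ := (Submodule.ne_bot_iff _).mp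
    (ker_ne_bot_of_finrank_lt (f := (B u).prod (B v)) (by simpa using hV))
  exact ⟨w, hw₀, by simpa using hw⟩

theorem SeparatingRight.eq_zero_of_forall_basis (hB : B.SeparatingRight) {ι : Type*}
    (b : Basis ι K V) {y : V} (h : ∀ i, B (b i) y = 0) : y = 0 :=
  hB y fun x => LinearMap.congr_fun (b.ext (f₁ := B.flip y) (f₂ := 0) h) x

theorem IsSymm.apply_ne_zero_of_isotropic (hB : B.IsSymm) (hBs : B.SeparatingRight)
    (hV : finrank K V = 3) {u v : V} (huv : LinearIndependent K ![u, v]) (hu : B u u = 0)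
    (hv : B v v = 0) : B u v ≠ 0 := by
  intro h
  have hvu : B v u = 0 := hB.eq_iff.mp h
  obtain ⟨z, hz⟩ := exists_linearIndependent_cons_of_lt_finrank huv (by simp [hV])
  let b := basisOfLinearIndependentOfCardEqFinrank hz (by simp [hV])
  have hb : ⇑b = ![z, u, v] := coe_basisOfLinearIndependentOfCardEqFinrank _ _
  -- `B z v • u - B z u • v` is orthogonal to the basis `z, u, v`, hence zero.
  have hw : B z v • u + (-B z u) • v = 0 :=
    SeparatingRight.eq_zero_of_forall_basis hBs b fun i => by
      fin_cases i <;> simp [hb, hu, hv, h, hvu, mul_comm]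
  obtain ⟨-, hzu⟩ := LinearIndependent.pair_iff.mp huv _ _ hw
  rw [neg_eq_zero] at hzu
  exact huv.ne_zero 0 <| SeparatingRight.eq_zero_of_forall_basis hBs b fun i => by
    fin_cases i <;> simp [hb, hzu, hu, hvu]

theorem linearIndependent_of_orthogonal_hyperbolic_pair {u v w : V} (hu : B u u = 0)
    (hv : B v v = 0) (huv : B u v = 1) (hvu : B v u = 1) (huw : B u w = 0) (hvw : B v w = 0)
    (hw : w ≠ 0) : LinearIndependent K ![w, u, v] := by
  rw [Fintype.linearIndependent_iff]
  intro g hg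
  simp only [Fin.sum_univ_three, Matrix.cons_val] at hg
  have h₂ : g 2 = 0 := by simpa [hu, huv, huw] using congrArg (B u) hg
  have h₁ : g 1 = 0 := by simpa [hv, hvu, hvw] using congrArg (B v) hg
  have h₀ : g 0 = 0 := by simpa [h₁, h₂, hw] using hg
  intro i
  fin_cases i <;> assumption

theorem IsSymm.exists_basis_toMatrix₂_eq (hB : B.IsSymm) (hBs : B.SeparatingRight)
    (hV : finrank K V = 3) (hN : ∀ a, σ a = a → ∃ c, σ c * c = a) {u v : V}
    (huv : LinearIndependent K ![u, v]) (hu : B u u = 0) (hv : B v v = 0) :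
    ∃ (b : Basis (Fin 3) K V) (c : K), b 1 = u ∧ b 2 = c • v ∧
      toMatrix₂ b b B = !![1, 0, 0; 0, 0, 1; 0, 1, 0] := by
  have : FiniteDimensional K V := Module.finite_of_finrank_eq_succ hV
  have huv₀ := hB.apply_ne_zero_of_isotropic hBs hV huv hu hv
  set v' := (B u v)⁻¹ • v
  have huv' : B u v' = 1 := by simp [v', huv₀]
  have hvu' : B v' u = 1 := by rw [← hB.eq, huv', map_one]
  have hv' : B v' v' = 0 := by simp [v', hv]
  obtain ⟨w₀, hw₀, huw₀, hvw₀⟩ :=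
    exists_ne_zero_apply_eq_zero_of_two_lt_finrank (B := B) (by omega) u v'
  have hw₀w₀ : B w₀ w₀ ≠ 0 := by
    intro h
    let b₀ := basisOfLinearIndependentOfCardEqFinrank
      (linearIndependent_of_orthogonal_hyperbolic_pair hu hv' huv' hvu' huw₀ hvw₀ hw₀)
      (by simp [hV])
    have hb₀ : ⇑b₀ = ![w₀, u, v'] := coe_basisOfLinearIndependentOfCardEqFinrank _ _
    exact hw₀ <| SeparatingRight.eq_zero_of_forall_basis hBs b₀ fun i => by
      fin_cases i <;> simp [hb₀, h, huw₀, hvw₀]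
  obtain ⟨c, hc⟩ := hN (B w₀ w₀)⁻¹ (by rw [map_inv₀, hB.eq])
  set w := c • w₀
  have hw : B w w = 1 :=
    calc B w w = σ c * c * B w₀ w₀ := by simp [w]; ring
      _ = 1 := by rw [hc, inv_mul_cancel₀ hw₀w₀]
  have huw : B u w = 0 := by simp [w, huw₀]
  have hvw : B v' w = 0 := by simp [w, hvw₀]
  have hw0 : w ≠ 0 := by rintro h; simp [h] at hw
  let b := basisOfLinearIndependentOfCardEqFinrank
    (linearIndependent_of_orthogonal_hyperbolic_pair hu hv' huv' hvu' huw hvw hw0) (by simp [hV])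
  have hb : ⇑b = ![w, u, v'] := coe_basisOfLinearIndependentOfCardEqFinrank _ _
  refine ⟨b, (B u v)⁻¹, by simp [hb], by simp [hb, v'], ?_⟩
  have hwu : B w u = 0 := hB.eq_iff.mp huw
  have hwv : B w v' = 0 := hB.eq_iff.mp hvw
  ext i j
  fin_cases i <;> fin_cases j <;>
    simp [toMatrix₂_apply, hb, hw, hu, hv', huv', hvu', huw, hvw, hwu, hwv]

theorem apply_basis_equiv_apply {ι : Type*} [Fintype ι] [DecidableEq ι] {b b' : Basis ι K V}
    (h : toMatrix₂ b b B = toMatrix₂ b' b' B) (x y : V) :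
    B (b.equiv b' (Equiv.refl ι) x) (b.equiv b' (Equiv.refl ι) y) = B x y := by
  set f := b.equiv b' (Equiv.refl ι)
  have : (B.comp (f : V →ₗ[K] V)).compl₂ (f : V →ₗ[K] V) = B :=
    ext_basis b b fun i j => by simpa [f] using (congrFun (congrFun h i) j).symm
  exact LinearMap.congr_fun₂ this x y

end LinearMap

section Projective

variable {K V : Type*} [Field K] [AddCommGroup V] [Module K V] {σ : K →+* K}
  {B : V →ₛₗ[σ] V →ₗ[K] K}

def isotropicPoints (B : V →ₛₗ[σ] V →ₗ[K] K) : Set (ℙ K V) :=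
  {p | B p.rep p.rep = 0}

theorem mk_mem_isotropicPoints_iff {v : V} (hv : v ≠ 0) :
    mk K v hv ∈ isotropicPoints B ↔ B v v = 0 := by
  obtain ⟨a, ha⟩ := exists_smul_eq_mk_rep K v hv
  simp [isotropicPoints, ← ha, Units.smul_def, a.ne_zero]

theorem image_map_isotropicPoints (f : V ≃ₗ[K] V) (hf : ∀ x y, B (f x) (f y) = B x y) :
    Projectivization.map (f : V →ₗ[K] V) f.injective '' isotropicPoints B =
      isotropicPoints B := by
  have hpre : Projectivization.map (f : V →ₗ[K] V) f.injective ⁻¹' isotropicPoints B =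
      isotropicPoints B := by
    ext p
    induction p using Projectivization.ind with
    | h x hx => simp [map_mk, mk_mem_isotropicPoints_iff, hf]
  have hsurj : Function.Surjective (Projectivization.map (f : V →ₗ[K] V) f.injective) := by
    intro p
    induction p using Projectivization.ind with
    | h x hx => exact ⟨mk K (f.symm x) (by simpa using hx), by simp [map_mk]⟩
  calc _ = Projectivization.map (f : V →ₗ[K] V) f.injective ''
        (Projectivization.map (f : V →ₗ[K] V) f.injective ⁻¹' isotropicPoints B) := by
        rw [hpre]
    _ = isotropicPoints B := hsurj.image_preimage _

theorem LinearMap.IsSymm.exists_basis_mk_eq (hB : B.IsSymm) (hBs : B.SeparatingRight)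
    (hV : finrank K V = 3) (hN : ∀ a, σ a = a → ∃ c, σ c * c = a) {P₁ P₂ : ℙ K V}
    (hP₁ : P₁ ∈ isotropicPoints B) (hP₂ : P₂ ∈ isotropicPoints B) (hP : P₁ ≠ P₂) :
    ∃ b : Basis (Fin 3) K V, Projectivization.mk K (b 1) (b.ne_zero 1) = P₁ ∧
      Projectivization.mk K (b 2) (b.ne_zero 2) = P₂ ∧
      LinearMap.toMatrix₂ b b B = !![1, 0, 0; 0, 0, 1; 0, 1, 0] := by
  have hind : LinearIndependent K ![P₁.rep, P₂.rep] := by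
    convert independent_iff.mp ((independent_pair_iff_ne _ _).mpr hP) using 1
    ext i
    fin_cases i <;> rfl
  obtain ⟨b, c, hb₁, hb₂, hbB⟩ := hB.exists_basis_toMatrix₂_eq hBs hV hN hind hP₁ hP₂
  refine ⟨b, ?_, ?_, hbB⟩
  · simp_rw [hb₁, mk_rep]
  · rw [← mk_rep P₂, mk_eq_mk_iff']
    exact ⟨c, hb₂.symm⟩

theorem LinearMap.IsSymm.exists_isometry_map_eq (hB : B.IsSymm) (hBs : B.SeparatingRight)
    (hV : finrank K V = 3) (hN : ∀ a, σ a = a → ∃ c, σ c * c = a) {P₁ P₂ Q₁ Q₂ : ℙ K V}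
    (hP₁ : P₁ ∈ isotropicPoints B) (hP₂ : P₂ ∈ isotropicPoints B)
    (hQ₁ : Q₁ ∈ isotropicPoints B) (hQ₂ : Q₂ ∈ isotropicPoints B) (hP : P₁ ≠ P₂)
    (hQ : Q₁ ≠ Q₂) :
    ∃ f : V ≃ₗ[K] V, (∀ x y, B (f x) (f y) = B x y) ∧
      Projectivization.map (f : V →ₗ[K] V) f.injective P₁ = Q₁ ∧
      Projectivization.map (f : V →ₗ[K] V) f.injective P₂ = Q₂ := by
  obtain ⟨b, rfl, rfl, hb⟩ := hB.exists_basis_mk_eq hBs hV hN hP₁ hP₂ hP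
  obtain ⟨b', rfl, rfl, hb'⟩ := hB.exists_basis_mk_eq hBs hV hN hQ₁ hQ₂ hQ
  refine ⟨b.equiv b' (Equiv.refl _), LinearMap.apply_basis_equiv_apply (hb.trans hb'.symm),
    ?_, ?_⟩ <;> simp [map_mk]

end Projective

section StandardHermitianForm

variable {K : Type*} [Field K] (σ : K →+* K) (ι : Type*) [Fintype ι]

def stdHermForm : (ι → K) →ₛₗ[σ] (ι → K) →ₗ[K] K :=
  LinearMap.mk₂'ₛₗ σ (RingHom.id K) (fun x y => ∑ i, σ (x i) * y i)
    (fun x x' y => by simp [add_mul, Finset.sum_add_distrib])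
    (fun c x y => by simp [Finset.mul_sum, mul_assoc])
    (fun x y y' => by simp [mul_add, Finset.sum_add_distrib])
    (fun c x y => by simp [Finset.mul_sum, mul_left_comm])

variable {σ ι}

@[simp]
theorem stdHermForm_apply (x y : ι → K) : stdHermForm σ ι x y = ∑ i, σ (x i) * y i := rfl

theorem isSymm_stdHermForm (hσ : ∀ a, σ (σ a) = a) : (stdHermForm σ ι).IsSymm :=
  ⟨fun x y => by simp [hσ, mul_comm]⟩

theorem separatingRight_stdHermForm : (stdHermForm σ ι).SeparatingRight := by
  classical
  intro y hy
  funext i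
  simpa [Pi.single_apply] using hy (Pi.single i 1)

end StandardHermitianForm

theorem herm_eq_isotropicPoints {K : Type} [Field K] {q : ℕ} {σ : K →+* K}
    (hσ : ∀ a, σ a = a ^ q) (n : ℕ) :
    Herm K q n = isotropicPoints (stdHermForm σ (Fin (n + 1))) := by
  ext p
  simp [Herm, isotropicPoints, hσ, pow_succ]

/-- The group of linear collineations stabilizing `H(2,q^2)` acts
`2`-transitively on the points of `H(2,q^2)`. -/
theorem linear_collineations_two_transitive (q : ℕ) (hq : IsPrimePow q)
    (hF : Fintype.card F = q ^ 2)
    (P₁ P₂ Q₁ Q₂ : PG F 2)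
    (hP₁ : P₁ ∈ Herm F q 2) (hP₂ : P₂ ∈ Herm F q 2)
    (hQ₁ : Q₁ ∈ Herm F q 2) (hQ₂ : Q₂ ∈ Herm F q 2)
    (hP : P₁ ≠ P₂) (hQ : Q₁ ≠ Q₂) :
    ∃ f : (Fin 3 → F) ≃ₗ[F] (Fin 3 → F),
      inducedMap F 2 f '' Herm F q 2 = Herm F q 2 ∧
      inducedMap F 2 f P₁ = Q₁ ∧ inducedMap F 2 f P₂ = Q₂ := by
  obtain ⟨σ, hσ⟩ := FiniteField.exists_ringHom_apply_eq_pow hq hF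
  have hσσ : ∀ a, σ (σ a) = a := fun a => by
    rw [hσ, hσ, ← pow_mul, ← sq, ← hF, FiniteField.pow_card]
  have hN : ∀ a, σ a = a → ∃ c, σ c * c = a := fun a ha => by
    obtain ⟨c, hc⟩ := FiniteField.exists_pow_add_one_eq_of_pow_eq_self hF (by rwa [← hσ])
    exact ⟨c, by rw [hσ, ← pow_succ, hc]⟩
  rw [herm_eq_isotropicPoints hσ] at hP₁ hP₂ hQ₁ hQ₂ ⊢
  obtain ⟨f, hf, hf₁, hf₂⟩ := (isSymm_stdHermForm hσσ).exists_isometry_map_eq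
    separatingRight_stdHermForm (by simp) hN hP₁ hP₂ hQ₁ hQ₂ hP hQ
  exact ⟨f, image_map_isotropicPoints f hf, hf₁, hf₂⟩
end

section
/- Let q be a prime power. The automorphism group of NU(3,q^2) does not act 3-transitively on tangent lines: if ℓ_1, ℓ_2, ℓ_3 are three distinct tangent lines of H(2,q^2) passing through a common point, and m_1, m_2, m_3 are three distinct tangent lines of H(2,q^2) whose three pairwise intersection points are distinct, then there is no automorphism g of NU(3,q^2) mapping, for each i, the set of non-isotropic points of ℓ_i onto the set of non-isotropic points of m_i. -/
open Projectivization
open scoped LinearAlgebra.Projectivization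

variable (F : Type) [Field F] [Fintype F]

/-!
An automorphism of `NU(3,q²)` is in particular a bijection of the non-isotropic points, so it
preserves which intersections of the vertex sets of lines are empty. Let `P` be the common point
of the `ℓᵢ`. If `P` is non-isotropic, its image lies on all three `mᵢ`, which are not concurrent.
If `P` is isotropic, the `ℓᵢ` have pairwise disjoint vertex sets; but the points `m₁ ∩ m₂` and
`m₁ ∩ m₃` are distinct points of the tangent `m₁`, so one of them is a vertex lying on two `mᵢ`.
-/

section

variable {K : Type} [Field K]

lemma lineSet_inter_subsingleton {n : ℕ} {W₁ W₂ : Submodule K (Fin (n+1) → K)}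
    (h₁ : IsLine K n W₁) (h₂ : IsLine K n W₂) (hne : W₁ ≠ W₂) :
    (lineSet K n W₁ ∩ lineSet K n W₂).Subsingleton := by
  have hinf : Module.finrank K ↥(W₁ ⊓ W₂) ≤ 1 := by
    by_contra! h
    have e₁ : W₁ ⊓ W₂ = W₁ := Submodule.eq_of_le_of_finrank_le inf_le_left (by rw [h₁]; omega)
    have e₂ : W₁ ⊓ W₂ = W₂ := Submodule.eq_of_le_of_finrank_le inf_le_right (by rw [h₂]; omega)
    exact hne (e₁.symm.trans e₂)
  have hpoint : ∀ p ∈ lineSet K n W₁ ∩ lineSet K n W₂, p.submodule = W₁ ⊓ W₂ :=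
    fun p hp => Submodule.eq_of_le_of_finrank_le (le_inf hp.1 hp.2)
      (by rw [p.finrank_submodule]; exact hinf)
  exact fun p hp p' hp' => submodule_injective ((hpoint p hp).trans (hpoint p' hp').symm)

lemma lineSet_inter_nonempty {W₁ W₂ : Submodule K (Fin 3 → K)}
    (h₁ : IsLine K 2 W₁) (h₂ : IsLine K 2 W₂) :
    (lineSet K 2 W₁ ∩ lineSet K 2 W₂).Nonempty := by
  have hsum := Submodule.finrank_sup_add_finrank_inf_eq W₁ W₂
  have hsup : Module.finrank K ↥(W₁ ⊔ W₂) ≤ 3 := by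
    simpa only [Module.finrank_fin_fun] using Submodule.finrank_le (W₁ ⊔ W₂)
  have hbot : W₁ ⊓ W₂ ≠ ⊥ := by
    intro h
    rw [h, finrank_bot, h₁, h₂] at hsum
    omega
  obtain ⟨v, hv, hv0⟩ := Submodule.exists_mem_ne_zero_of_ne_bot hbot
  refine ⟨mk K v hv0, ?_, ?_⟩ <;>
    change (mk K v hv0).submodule ≤ _ <;>
    rw [submodule_mk, Submodule.span_singleton_le_iff_mem]
  exacts [hv.1, hv.2]

lemma lineVerts_inter_eq_empty_of_mem_herm {q n : ℕ} {W₁ W₂ : Submodule K (Fin (n+1) → K)}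
    (h₁ : IsLine K n W₁) (h₂ : IsLine K n W₂) (hne : W₁ ≠ W₂) {P : PG K n}
    (hP₁ : P ∈ lineSet K n W₁) (hP₂ : P ∈ lineSet K n W₂) (hP : P ∈ Herm K q n) :
    lineVerts K q n W₁ ∩ lineVerts K q n W₂ = ∅ := by
  refine Set.eq_empty_of_forall_notMem fun u hu => u.2 ?_
  rwa [lineSet_inter_subsingleton h₁ h₂ hne hu ⟨hP₁, hP₂⟩]

lemma lineVerts_inter_nonempty_or_of_isTangent {q n : ℕ}
    {m₁ m₂ m₃ : Submodule K (Fin (n+1) → K)} (hm₁ : IsTangent K q n m₁) {Q₁₂ Q₁₃ : PG K n}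
    (hQ₁₂ : Q₁₂ ∈ lineSet K n m₁ ∩ lineSet K n m₂) (hQ₁₃ : Q₁₃ ∈ lineSet K n m₁ ∩ lineSet K n m₃)
    (hne : Q₁₂ ≠ Q₁₃) :
    (lineVerts K q n m₁ ∩ lineVerts K q n m₂).Nonempty ∨
      (lineVerts K q n m₁ ∩ lineVerts K q n m₃).Nonempty := by
  have hsub : (lineSet K n m₁ ∩ Herm K q n).Subsingleton := by
    obtain ⟨a, ha⟩ := Set.ncard_eq_one.mp hm₁.2
    exact ha ▸ Set.subsingleton_singleton
  by_cases h₁₂ : Q₁₂ ∈ Herm K q n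
  · have h₁₃ : Q₁₃ ∉ Herm K q n := fun h₁₃ =>
      hne (hsub ⟨hQ₁₂.1, h₁₂⟩ ⟨hQ₁₃.1, h₁₃⟩)
    exact Or.inr ⟨⟨Q₁₃, h₁₃⟩, hQ₁₃⟩
  · exact Or.inl ⟨⟨Q₁₂, h₁₂⟩, hQ₁₂⟩

end

theorem aut_not_three_transitive_on_tangents (q : ℕ)
    (l₁ l₂ l₃ m₁ m₂ m₃ : Submodule F (Fin 3 → F))
    (hl₁ : IsTangent F q 2 l₁) (hl₂ : IsTangent F q 2 l₂) (hl₃ : IsTangent F q 2 l₃)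
    (hm₁ : IsTangent F q 2 m₁) (hm₂ : IsTangent F q 2 m₂) (hm₃ : IsTangent F q 2 m₃)
    (hl : l₁ ≠ l₂ ∧ l₁ ≠ l₃ ∧ l₂ ≠ l₃)
    (hconc : ∃ P : PG F 2,
      P ∈ lineSet F 2 l₁ ∧ P ∈ lineSet F 2 l₂ ∧ P ∈ lineSet F 2 l₃)
    (htri : ∀ P₁₂ P₁₃ P₂₃ : PG F 2,
      P₁₂ ∈ lineSet F 2 m₁ → P₁₂ ∈ lineSet F 2 m₂ →
      P₁₃ ∈ lineSet F 2 m₁ → P₁₃ ∈ lineSet F 2 m₃ →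
      P₂₃ ∈ lineSet F 2 m₂ → P₂₃ ∈ lineSet F 2 m₃ →
      P₁₂ ≠ P₁₃ ∧ P₁₂ ≠ P₂₃ ∧ P₁₃ ≠ P₂₃) :
    ¬ ∃ g : NU F q 2 ≃g NU F q 2,
        ⇑g '' lineVerts F q 2 l₁ = lineVerts F q 2 m₁ ∧
        ⇑g '' lineVerts F q 2 l₂ = lineVerts F q 2 m₂ ∧
        ⇑g '' lineVerts F q 2 l₃ = lineVerts F q 2 m₃ := by
  rintro ⟨g, hg₁, hg₂, hg₃⟩
  obtain ⟨P, hP₁, hP₂, hP₃⟩ := hconc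
  have image_inter (A B : Set {p : PG F 2 // p ∉ Herm F q 2}) : g '' (A ∩ B) = g '' A ∩ g '' B :=
    Set.image_inter g.injective
  by_cases hPH : P ∈ Herm F q 2
  · obtain ⟨Q₁₂, hQ₁₂⟩ := lineSet_inter_nonempty hm₁.1 hm₂.1
    obtain ⟨Q₁₃, hQ₁₃⟩ := lineSet_inter_nonempty hm₁.1 hm₃.1
    obtain ⟨Q₂₃, hQ₂₃⟩ := lineSet_inter_nonempty hm₂.1 hm₃.1
    have hne := (htri Q₁₂ Q₁₃ Q₂₃ hQ₁₂.1 hQ₁₂.2 hQ₁₃.1 hQ₁₃.2 hQ₂₃.1 hQ₂₃.2).1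
    have h₁₂ := lineVerts_inter_eq_empty_of_mem_herm hl₁.1 hl₂.1 hl.1 hP₁ hP₂ hPH
    have h₁₃ := lineVerts_inter_eq_empty_of_mem_herm hl₁.1 hl₃.1 hl.2.1 hP₁ hP₃ hPH
    rcases lineVerts_inter_nonempty_or_of_isTangent hm₁ hQ₁₂ hQ₁₃ hne with h | h
    · simp [← hg₁, ← hg₂, ← image_inter, h₁₂] at h
    · simp [← hg₁, ← hg₃, ← image_inter, h₁₃] at h
  · have hu : (⟨P, hPH⟩ : {p : PG F 2 // p ∉ Herm F q 2}) ∈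
        lineVerts F q 2 l₁ ∩ lineVerts F q 2 l₂ ∩ lineVerts F q 2 l₃ := ⟨⟨hP₁, hP₂⟩, hP₃⟩
    have hgu := Set.mem_image_of_mem g hu
    rw [image_inter, image_inter, hg₁, hg₂, hg₃] at hgu
    obtain ⟨⟨h₁, h₂⟩, h₃⟩ := hgu
    exact (htri _ _ _ h₁ h₂ h₁ h₃ h₂ h₃).1 rfl
end
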